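/- Every triangulation of a convex polygon admits at least one clockwise-oriented central triangle. -/

import Mathlib

/-!
Combinatorial model of a convex polygon with `n` vertices, labeled by `Fin n`
in clockwise cyclic order.
-/

/-- `c` lies strictly inside the clockwise arc going from `a` to `b`. -/
def Between (n : ℕ) (a c b : Fin n) : Prop :=
  0 < (c - a).val ∧ (c - a).val < (b - a).val

/-- Two edges on the polygon cross: their endpoints strictly interleave
in the clockwise cyclic order. -/
def Cross (n : ℕ) (e f : Finset (Fin n)) : Prop :=
  ∃ a b c d : Fin n, e = {a, b} ∧ f = {c, d} ∧ Between n a c b ∧ Between n b d a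

/-- The vertex immediately following `i` clockwise. -/
def nextV (n : ℕ) (i : Fin n) : Fin n :=
  ⟨(i.val + 1) % n, Nat.mod_lt _ i.pos⟩

/-- Boundary edges of the polygon: the pairs of cyclically consecutive vertices. -/
def IsBoundary (n : ℕ) (e : Finset (Fin n)) : Prop :=
  ∃ i : Fin n, e = {i, nextV n i}

/-- `E` is a triangulation of the convex (sub)polygon on the vertex set `W`:
an inclusion-maximal set of pairwise non-crossing edges on `W`. -/
def IsTriangulationOn (n : ℕ) (W : Finset (Fin n)) (E : Finset (Finset (Fin n))) : Prop :=
  (∀ e ∈ E, e ⊆ W) ∧ (∀ e ∈ E, e.card = 2) ∧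
    (∀ e ∈ E, ∀ f ∈ E, ¬ Cross n e f) ∧
    (∀ e : Finset (Fin n), e ⊆ W → e.card = 2 → (∀ f ∈ E, ¬ Cross n e f) → e ∈ E)

/-- A triangulation of the convex polygon with `n` vertices. -/
structure Triangulation (n : ℕ) where
  edges : Finset (Finset (Fin n))
  isTri : IsTriangulationOn n Finset.univ edges

theorem Triangulation.edges_injective (n : ℕ) :
    Function.Injective (Triangulation.edges (n := n)) := by
  rintro ⟨e, he⟩ ⟨f, hf⟩ h
  dsimp at h
  subst h
  rfl

/-- The flip-graph of the polygon: two triangulations are adjacent exactly when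
they differ by a single edge. -/
def flipGraph (n : ℕ) : SimpleGraph (Triangulation n) where
  Adj T U := T ≠ U ∧ (T.edges \ U.edges).card = 1 ∧ (U.edges \ T.edges).card = 1
  symm := ⟨fun T U h => ⟨h.1.symm, h.2.2, h.2.1⟩⟩
  loopless := ⟨fun T h => h.1 rfl⟩

noncomputable instance (n : ℕ) : Fintype (Triangulation n) :=
  Fintype.ofInjective Triangulation.edges (Triangulation.edges_injective n)

open Classical in
/-- The number of interior edges of `T` incident to the vertex `v`. -/
noncomputable def interiorDeg (n : ℕ) (T : Triangulation n) (v : Fin n) : ℕ :=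
  (T.edges.filter fun e => v ∈ e ∧ ¬ IsBoundary n e).card

/-- `T` has an ear in `v`: no interior edge of `T` is incident to `v`. -/
def HasEar (n : ℕ) (T : Triangulation n) (v : Fin n) : Prop :=
  ∀ e ∈ T.edges, ¬ IsBoundary n e → v ∉ e

/-- The eccentricity of `T` in the flip-graph: the maximum of `d(T,U)` over all
triangulations `U`. -/
noncomputable def eccentricity (n : ℕ) (T : Triangulation n) : ℕ :=
  Finset.univ.sup fun U : Triangulation n => (flipGraph n).dist T U

/-- The monotone relabeling of the vertices of the polygon after the deletion of
the vertex `a`. -/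
def collapse (n : ℕ) (a v : Fin (n + 2)) : Fin (n + 1) :=
  ⟨if v.val < a.val then v.val else v.val - 1, by
    have := v.isLt; have := a.isLt; split <;> omega⟩

/-- The edge set of the triangulation `T∖a` obtained by deleting the vertex `a` from a
triangulation with edge set `E`: remove the boundary edge `{a, a+1}`, replace `a` by
`a+1` in every remaining edge, and relabel the remaining vertices monotonically. -/
def deleteEdges (n : ℕ) (a : Fin (n + 2)) (E : Finset (Finset (Fin (n + 2)))) :
    Finset (Finset (Fin (n + 1))) :=
  (E.erase {a, a + 1}).image fun e =>
    e.image fun v => collapse n a (if v = a then a + 1 else v)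

/-- `c` is an apex of a triangle of `X` on the boundary edge `{a,b}`. -/
def ApexOf (n : ℕ) (X : Triangulation n) (a b c : Fin n) : Prop :=
  c ≠ a ∧ c ≠ b ∧ ({a, c} : Finset (Fin n)) ∈ X.edges ∧ ({b, c} : Finset (Fin n)) ∈ X.edges

/-- The flip between the adjacent triangulations `X` and `Y` is incident to `{a,b}`:
it affects the triangle containing `{a,b}`. -/
def FlipIncident (n : ℕ) (X Y : Triangulation n) (a b : Fin n) : Prop :=
  ∃ c : Fin n, (ApexOf n X a b c ∧ ¬ ApexOf n Y a b c) ∨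
    (ApexOf n Y a b c ∧ ¬ ApexOf n X a b c)

open Classical in
/-- The number of flips incident to `{a,b}` along the walk `p` in the flip-graph. -/
noncomputable def flipsIncident {n : ℕ} {T U : Triangulation n}
    (p : (flipGraph n).Walk T U) (a b : Fin n) : ℕ :=
  (p.darts.filter fun d => decide (FlipIncident n d.toProd.1 d.toProd.2 a b)).length

open Classical in
/-- `a 0, …, a (k-1)` is a shelling of `T` at `v`: an ordering of the vertices not
joined to `v` by an edge of `T` such that, for every `i`, the edges of `T` incident
to none of `a i, …, a (k-1)` form a triangulation of a convex polygon. -/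
def IsShelling (n k : ℕ) (T : Triangulation n) (v : Fin n) (a : Fin k → Fin n) : Prop :=
  Function.Injective a ∧
    (∀ w : Fin n, (∃ i, a i = w) ↔ w ≠ v ∧ ({v, w} : Finset (Fin n)) ∉ T.edges) ∧
    ∀ i : Fin k,
      IsTriangulationOn n (Finset.univ.filter fun w => ∀ j, i ≤ j → w ≠ a j)
        (T.edges.filter fun e => ∀ j, i ≤ j → a j ∉ e)

/-- `a i` is incident to at least two interior edges of `U` whose other vertex is not
among `a i, …, a (k-1)`. -/
def GoodAt (n k : ℕ) (U : Triangulation n) (a : Fin k → Fin n) (i : Fin k) : Prop :=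
  ∃ e₁ e₂ : Finset (Fin n), e₁ ∈ U.edges ∧ e₂ ∈ U.edges ∧ e₁ ≠ e₂ ∧
    ¬ IsBoundary n e₁ ∧ ¬ IsBoundary n e₂ ∧ a i ∈ e₁ ∧ a i ∈ e₂ ∧
    (∀ w ∈ e₁, w ≠ a i → ∀ j, i ≤ j → w ≠ a j) ∧
    (∀ w ∈ e₂, w ≠ a i → ∀ j, i ≤ j → w ≠ a j)

/-- The set `Ω(T,v)`: triangulations `U` with an ear in `v` such that, for some
shelling `a` of `T` at `v`, every `a i` is incident to at least two interior edges of
`U` whose other vertex is not among `a i, …, a (k-1)`. -/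
def Omega (n k : ℕ) (T : Triangulation n) (v : Fin n) : Set (Triangulation n) :=
  {U | HasEar n U v ∧ ∃ a : Fin k → Fin n, IsShelling n k T v a ∧ ∀ i, GoodAt n k U a i}

/-- The set `Ω̃(T,a,b)`: triangulations `U` such that every interior edge shared by `T`
and `U` is incident to `a` or to `b`, and every vertex on the left of `(a,b)` is
incident to at least two interior edges of `U`. -/
def OmegaTilde (n : ℕ) (T : Triangulation n) (a b : Fin n) : Set (Triangulation n) :=
  {U | (∀ e ∈ T.edges, e ∈ U.edges → ¬ IsBoundary n e → a ∈ e ∨ b ∈ e) ∧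
    ∀ c : Fin n, Between n a c b → 2 ≤ interiorDeg n U c}

/-- `(a,b,c)` is a clockwise-oriented central triangle of `T`: the oriented edges
`(a,b)`, `(b,c)` and `(c,a)` have length at most `n/2` and `{a,b}`, `{b,c}`, `{a,c}`
are edges of `T`. -/
def CentralTriangle (n : ℕ) (T : Triangulation n) (a b c : Fin n) : Prop :=
  2 * (b - a).val ≤ n ∧ 2 * (c - b).val ≤ n ∧ 2 * (a - c).val ≤ n ∧
    ({a, b} : Finset (Fin n)) ∈ T.edges ∧ ({b, c} : Finset (Fin n)) ∈ T.edges ∧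
    ({a, c} : Finset (Fin n)) ∈ T.edges

/-!
Start from an edge `{a, b}` of `T` with `0 < b - a ≤ n/2` (a boundary edge will do), where
`b - a` is the clockwise length. The triangle of `T` on the other side of it, with apex `c`,
has clockwise side lengths `b - a`, `c - b`, `a - c` summing to `n`, so at most one of them
exceeds `n/2`. If none does, `(a, b, c)` is central; otherwise that side, read the other way
round, is a new short edge whose complementary length (`c - b` or `a - c`) is smaller than
`a - b`, so the descent terminates.
-/

namespace Fin

variable {n : ℕ}

lemma val_sub_eq_ite (x y : Fin n) :
    (x - y).val = if y.val ≤ x.val then x.val - y.val else n + x.val - y.val := by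
  split_ifs with h
  · exact sub_val_of_le h
  · exact coe_sub_iff_lt.mpr (not_le.mp h)

lemma val_sub_add_val_sub_rev {x y : Fin n} (h : x ≠ y) : (x - y).val + (y - x).val = n := by
  have := Fin.val_ne_of_ne h
  have := x.isLt; have := y.isLt
  simp only [val_sub_eq_ite]
  split_ifs <;> omega

end Fin

section Arcs

variable {n : ℕ}

lemma val_nextV_sub (hn : 2 ≤ n) (i : Fin n) : (nextV n i - i).val = 1 := by
  have := i.isLt
  have hnext : (nextV n i).val = (i.val + 1) % n := rfl
  rw [Fin.val_sub_eq_ite, hnext]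
  rcases Nat.lt_or_ge (i.val + 1) n with h | h
  · rw [Nat.mod_eq_of_lt h]; split_ifs <;> omega
  · rw [show i.val + 1 = n by omega, Nat.mod_self]; split_ifs <;> omega

lemma Between.ne_left {a c b : Fin n} (h : Between n a c b) : c ≠ a := by
  rintro rfl
  simp [Between, Fin.val_sub_eq_ite] at h

lemma Between.ne_right {a c b : Fin n} (h : Between n a c b) : c ≠ b := by
  rintro rfl
  exact lt_irrefl _ h.2

lemma Between.val_sub_add_val_sub {a c b : Fin n} (h : Between n a c b) :
    (c - a).val + (b - c).val = (b - a).val := by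
  have := a.isLt; have := b.isLt; have := c.isLt
  simp only [Between, Fin.val_sub_eq_ite] at *
  split_ifs at * <;> omega

lemma Between.of_between_right {a c x b : Fin n} (hc : Between n a c b)
    (hx : Between n c x b) :
    Between n a x b ∧ (c - a).val < (x - a).val ∧ Between n c x a := by
  have := a.isLt; have := b.isLt; have := c.isLt; have := x.isLt
  simp only [Between, Fin.val_sub_eq_ite] at *
  split_ifs at * <;> omega

lemma Between.or_of_between_rev {a c b y : Fin n} (hc : Between n a c b)
    (hy : Between n b y c) (hya : y ≠ a) : Between n b y a ∨ Between n a y c := by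
  have := Fin.val_ne_of_ne hya
  have := a.isLt; have := b.isLt; have := c.isLt; have := y.isLt
  simp only [Between, Fin.val_sub_eq_ite] at *
  split_ifs at * <;> omega

end Arcs

lemma Finset.pair_eq_pair_iff {α : Type*} [DecidableEq α] {x y z w : α} :
    ({x, y} : Finset α) = {z, w} ↔ x = z ∧ y = w ∨ x = w ∧ y = z := by
  rw [← coe_inj, coe_pair, coe_pair, Set.pair_eq_pair_iff]

namespace Triangulation

variable {n : ℕ}

lemma mem_edges_of_isBoundary (hn : 2 ≤ n) (T : Triangulation n) {e : Finset (Fin n)}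
    (he : IsBoundary n e) : e ∈ T.edges := by
  obtain ⟨i, rfl⟩ := he
  have hlen := val_nextV_sub hn i
  have hne : i ≠ nextV n i := by
    intro h
    rw [← h] at hlen
    simp [Fin.val_sub_eq_ite] at hlen
  refine T.isTri.2.2.2 _ (Finset.subset_univ _) (Finset.card_pair hne) ?_
  rintro f - ⟨p, q, r, s, hpq, -, hr, hs⟩
  rcases Finset.pair_eq_pair_iff.mp hpq with ⟨rfl, rfl⟩ | ⟨rfl, rfl⟩
  · exact absurd hr (by simp only [Between, hlen]; omega)
  · exact absurd hs (by simp only [Between, hlen]; omega)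

lemma exists_apex (T : Triangulation n) {a b : Fin n} (hab : {a, b} ∈ T.edges)
    (hlen : 2 ≤ (b - a).val) :
    ∃ c, Between n a c b ∧ {a, c} ∈ T.edges ∧ {c, b} ∈ T.edges := by
  classical
  have hn : 2 ≤ n := by have := (b - a).isLt; omega
  set S := Finset.univ.filter fun c => Between n a c b ∧ {a, c} ∈ T.edges
  have hnext : nextV n a ∈ S := by
    refine Finset.mem_filter.mpr
      ⟨Finset.mem_univ _, ?_, T.mem_edges_of_isBoundary hn ⟨a, rfl⟩⟩
    simp only [Between, val_nextV_sub hn]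
    omega
  obtain ⟨c, hcS, hcmax⟩ := S.exists_max_image (fun c => (c - a).val) ⟨_, hnext⟩
  obtain ⟨hacb, hac⟩ := (Finset.mem_filter.mp hcS).2
  refine ⟨c, hacb, hac,
    T.isTri.2.2.2 _ (Finset.subset_univ _) (Finset.card_pair hacb.ne_right) ?_⟩
  rintro f hf ⟨p, q, r, s, hpq, rfl, hr, hs⟩
  obtain ⟨x, y, hxy, hx, hy⟩ :
      ∃ x y, ({r, s} : Finset (Fin n)) = {x, y} ∧ Between n c x b ∧ Between n b y c := by
    rcases Finset.pair_eq_pair_iff.mp hpq with ⟨rfl, rfl⟩ | ⟨rfl, rfl⟩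
    · exact ⟨r, s, rfl, hr, hs⟩
    · exact ⟨s, r, Finset.pair_comm r s, hs, hr⟩
  rw [hxy] at hf
  obtain ⟨haxb, hcx, hcxa⟩ := hacb.of_between_right hx
  -- An edge `{x, y}` crossing `{c, b}` either ends at `a`, contradicting the choice of `c`,
  -- or crosses `{a, b}` or `{a, c}`.
  by_cases hya : y = a
  · subst hya
    have hxS : x ∈ S :=
      Finset.mem_filter.mpr ⟨Finset.mem_univ _, haxb, Finset.pair_comm x y ▸ hf⟩
    exact absurd (hcmax x hxS) (not_le.mpr hcx)
  · rcases hacb.or_of_between_rev hy hya with h | h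
    · exact T.isTri.2.2.1 _ hab _ hf ⟨a, b, x, y, rfl, rfl, haxb, h⟩
    · exact T.isTri.2.2.1 _ hac _ hf ⟨a, c, y, x, rfl, Finset.pair_comm x y, h, hcxa⟩

theorem exists_centralTriangle_of_short_edge (hn : 3 ≤ n) (T : Triangulation n) {a b : Fin n}
    (hab : {a, b} ∈ T.edges) (hpos : 0 < (b - a).val) (hshort : 2 * (b - a).val ≤ n) :
    ∃ x y z, CentralTriangle n T x y z := by
  have hba : b ≠ a := by
    rintro rfl
    simp [Fin.val_sub_eq_ite] at hpos
  have hrev := Fin.val_sub_add_val_sub_rev hba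
  obtain ⟨c, hc, hbc, hca⟩ :=
    T.exists_apex (Finset.pair_comm a b ▸ hab) (by omega : 2 ≤ (a - b).val)
  have hsum := hc.val_sub_add_val_sub
  have hcb_rev := Fin.val_sub_add_val_sub_rev hc.ne_left
  have hac_rev := Fin.val_sub_add_val_sub_rev hc.ne_right.symm
  obtain ⟨hcb_pos, hcb_lt⟩ := hc
  by_cases h₁ : 2 * (c - b).val ≤ n
  · by_cases h₂ : 2 * (a - c).val ≤ n
    · exact ⟨a, b, c, hshort, h₁, h₂, hab, hbc, Finset.pair_comm c a ▸ hca⟩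
    · exact T.exists_centralTriangle_of_short_edge hn (Finset.pair_comm c a ▸ hca)
        (by omega) (by omega)
  · exact T.exists_centralTriangle_of_short_edge hn (Finset.pair_comm b c ▸ hbc)
      (by omega) (by omega)
termination_by (a - b).val
decreasing_by all_goals omega

end Triangulation

/-- Every triangulation of a convex polygon admits at least one
clockwise-oriented central triangle. -/
theorem stmt12 (n : ℕ) (hn : 3 ≤ n) (T : Triangulation n) :
    ∃ a b c : Fin n, CentralTriangle n T a b c := by
  let v : Fin n := ⟨0, by omega⟩
  have hlen := val_nextV_sub (by omega) v
  exact T.exists_centralTriangle_of_short_edge hn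
    (T.mem_edges_of_isBoundary (by omega) ⟨v, rfl⟩) (by omega) (by omega)
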